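/- Let A, B be real symmetric n×n matrices with A nonsingular and not SDC. If there is a nonzero real eigenvalue λ of A⁻¹B such that A + (-1/λ)B ⪰ 0, then {μ ∈ ℝ : A + μB ⪰ 0} = {-1/λ}. -/

import Mathlib

/-!
If two distinct members `A + μ₁ • B`, `A + μ₂ • B` of the pencil are positive semidefinite, a
common kernel vector of theirs lies in `ker A ∩ ker B = 0`, so their sum `D` is positive definite.
A congruence taking `D` to `1`, followed by an orthogonal diagonalization of the transformed `B`,
diagonalizes `B` while keeping `D` at `1`; as `A` is a combination of `D` and `B`, it diagonalizes
`A` too. Hence a non-SDC pencil with `A` nonsingular has at most one PSD member, and `-1/λ` is one.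
-/

open Matrix

namespace Matrix

variable {ι : Type*} [Fintype ι] [DecidableEq ι]

/-- Simultaneously diagonalizable via congruence. -/
def IsSDC (A B : Matrix ι ι ℝ) : Prop :=
  ∃ P : Matrix ι ι ℝ, IsUnit P.det ∧ (Pᵀ * A * P).IsDiag ∧ (Pᵀ * B * P).IsDiag

open scoped MatrixOrder in
theorem PosDef.exists_transpose_mul_mul_eq_one {D : Matrix ι ι ℝ} (hD : D.PosDef) :
    ∃ E : Matrix ι ι ℝ, IsUnit E.det ∧ Eᵀ * D * E = 1 := by
  obtain ⟨S, rfl⟩ := CStarAlgebra.nonneg_iff_eq_star_mul_self.mp hD.posSemidef.nonneg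
  have hS : IsUnit S.det := by
    have := (isUnit_iff_isUnit_det _).mp hD.isUnit
    rw [det_mul] at this
    exact isUnit_of_mul_isUnit_right this
  refine ⟨S⁻¹, isUnit_nonsing_inv_det S hS, ?_⟩
  rw [star_eq_conjTranspose, conjTranspose_eq_transpose_of_trivial, transpose_nonsing_inv,
    show (Sᵀ)⁻¹ * (Sᵀ * S) * S⁻¹ = ((Sᵀ)⁻¹ * Sᵀ) * (S * S⁻¹) by noncomm_ring,
    nonsing_inv_mul _ (by rwa [det_transpose]), mul_nonsing_inv _ hS, one_mul]

theorem IsSymm.exists_transpose_mul_self_eq_one_isDiag {B : Matrix ι ι ℝ} (hB : B.IsSymm) :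
    ∃ U : Matrix ι ι ℝ, Uᵀ * U = 1 ∧ (Uᵀ * B * U).IsDiag := by
  have hH : B.IsHermitian := by
    rwa [IsHermitian, conjTranspose_eq_transpose_of_trivial]
  refine ⟨hH.eigenvectorUnitary, ?_, ?_⟩
  · rw [← conjTranspose_eq_transpose_of_trivial, ← star_eq_conjTranspose]
    exact Unitary.coe_star_mul_self _
  · rw [← conjTranspose_eq_transpose_of_trivial, ← star_eq_conjTranspose,
      ← Unitary.conjStarAlgAut_star_apply (S := ℝ), hH.conjStarAlgAut_star_eigenvectorUnitary]
    exact isDiag_diagonal _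

theorem PosDef.exists_transpose_mul_mul_eq_one_isDiag {D B : Matrix ι ι ℝ} (hD : D.PosDef)
    (hB : B.IsSymm) :
    ∃ P : Matrix ι ι ℝ, IsUnit P.det ∧ Pᵀ * D * P = 1 ∧ (Pᵀ * B * P).IsDiag := by
  obtain ⟨E, hE, hEDE⟩ := hD.exists_transpose_mul_mul_eq_one
  have hM : (Eᵀ * B * E).IsSymm := by
    simp only [IsSymm, transpose_mul, transpose_transpose, hB.eq, Matrix.mul_assoc]
  obtain ⟨U, hUU, hdiag⟩ := hM.exists_transpose_mul_self_eq_one_isDiag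
  have hU : IsUnit U.det :=
    isUnit_of_mul_isUnit_right (x := Uᵀ.det) (by rw [← det_mul, hUU, det_one]; exact isUnit_one)
  refine ⟨E * U, by rw [det_mul]; exact hE.mul hU, ?_, ?_⟩
  · rw [transpose_mul, show Uᵀ * Eᵀ * D * (E * U) = Uᵀ * (Eᵀ * D * E) * U by noncomm_ring,
      hEDE, Matrix.mul_one, hUU]
  · rwa [transpose_mul, show Uᵀ * Eᵀ * B * (E * U) = Uᵀ * (Eᵀ * B * E) * U by noncomm_ring]

theorem PosSemidef.posDef_add {C₁ C₂ : Matrix ι ι ℝ} (h₁ : C₁.PosSemidef)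
    (h₂ : C₂.PosSemidef) (hker : ∀ x, C₁ *ᵥ x = 0 → C₂ *ᵥ x = 0 → x = 0) :
    (C₁ + C₂).PosDef := by
  refine (h₁.add h₂).posDef_iff_det_ne_zero.mpr fun h0 => ?_
  obtain ⟨x, hx, hCx⟩ := exists_mulVec_eq_zero_iff.mpr h0
  have hq₁ := h₁.dotProduct_mulVec_nonneg x
  have hq₂ := h₂.dotProduct_mulVec_nonneg x
  have hsum : star x ⬝ᵥ C₁ *ᵥ x + star x ⬝ᵥ C₂ *ᵥ x = 0 := by
    rw [← dotProduct_add, ← add_mulVec, hCx, dotProduct_zero]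
  exact hx <| hker x ((h₁.dotProduct_mulVec_zero_iff x).mp (by linarith))
    ((h₂.dotProduct_mulVec_zero_iff x).mp (by linarith))

theorem isSDC_of_posSemidef_add_smul {A B : Matrix ι ι ℝ} (hB : B.IsSymm)
    (hker : ∀ x, A *ᵥ x = 0 → B *ᵥ x = 0 → x = 0) {μ₁ μ₂ : ℝ} (hne : μ₁ ≠ μ₂)
    (h₁ : (A + μ₁ • B).PosSemidef) (h₂ : (A + μ₂ • B).PosSemidef) : A.IsSDC B := by
  have hker' : ∀ x, (A + μ₁ • B) *ᵥ x = 0 → (A + μ₂ • B) *ᵥ x = 0 → x = 0 := by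
    intro x hx₁ hx₂
    rw [add_mulVec, smul_mulVec] at hx₁ hx₂
    have hBx : B *ᵥ x = 0 := by
      have : (μ₁ - μ₂) • B *ᵥ x = 0 :=
        calc (μ₁ - μ₂) • B *ᵥ x = (A *ᵥ x + μ₁ • B *ᵥ x) - (A *ᵥ x + μ₂ • B *ᵥ x) := by module
          _ = 0 := by rw [hx₁, hx₂, sub_zero]
      exact (smul_eq_zero.mp this).resolve_left (sub_ne_zero.mpr hne)
    exact hker x (by rwa [hBx, smul_zero, add_zero] at hx₁) hBx
  obtain ⟨P, hP, hPD, hPB⟩ := (h₁.posDef_add h₂ hker').exists_transpose_mul_mul_eq_one_isDiag hB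
  refine ⟨P, hP, ?_, hPB⟩
  have hA : A = (2⁻¹ : ℝ) • ((A + μ₁ • B) + (A + μ₂ • B)) - ((μ₁ + μ₂) / 2) • B := by module
  rw [hA, Matrix.mul_sub, Matrix.sub_mul, Matrix.mul_smul, Matrix.smul_mul, Matrix.mul_smul,
    Matrix.smul_mul, hPD]
  exact (isDiag_one.smul _).sub (hPB.smul _)

end Matrix

theorem not_sdc_psd_set_eq_singleton_general {n : ℕ}
    (A B : Matrix (Fin n) (Fin n) ℝ) (hB : B.IsSymm)
    (hAinv : IsUnit A.det)
    (hnsdc : ¬ ∃ P : Matrix (Fin n) (Fin n) ℝ, IsUnit P.det ∧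
      (Pᵀ * A * P).IsDiag ∧ (Pᵀ * B * P).IsDiag)
    (l : ℝ)
    (hpsd : (A + (-(1 / l)) • B).PosSemidef) :
    {μ : ℝ | (A + μ • B).PosSemidef} = {-(1 / l)} := by
  have hker : ∀ x, A *ᵥ x = 0 → B *ᵥ x = 0 → x = 0 := fun x hx _ =>
    mulVec_injective_iff_isUnit.mpr ((isUnit_iff_isUnit_det A).mpr hAinv) (by rw [hx, mulVec_zero])
  refine Set.eq_singleton_iff_unique_mem.mpr ⟨hpsd, fun μ hμ => ?_⟩
  by_contra hne
  exact hnsdc (isSDC_of_posSemidef_add_smul hB hker hne hμ hpsd)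

/-- For symmetric A, B with A nonsingular, not SDC: if λ ≠ 0 is a real eigenvalue of A⁻¹B
with A + (-1/λ)B ⪰ 0, then {μ : A + μB ⪰ 0} = {-1/λ}. -/
theorem not_sdc_psd_set_eq_singleton {n : ℕ}
    (A B : Matrix (Fin n) (Fin n) ℝ) (hA : A.IsSymm) (hB : B.IsSymm)
    (hAinv : IsUnit A.det)
    (hnsdc : ¬ ∃ P : Matrix (Fin n) (Fin n) ℝ, IsUnit P.det ∧
      (Pᵀ * A * P).IsDiag ∧ (Pᵀ * B * P).IsDiag)
    (l : ℝ) (hl : l ≠ 0)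
    (heig : ∃ v : Fin n → ℝ, v ≠ 0 ∧ (A⁻¹ * B) *ᵥ v = l • v)
    (hpsd : (A + (-(1 / l)) • B).PosSemidef) :
    {μ : ℝ | (A + μ • B).PosSemidef} = {-(1 / l)} :=
  not_sdc_psd_set_eq_singleton_general A B hB hAinv hnsdc l hpsd
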